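/- arXiv:2104.14186 — 4 statements merged into one kernel-verified Lean document; each statement's English description precedes it below -/
import Mathlib

section
/- Let B ∈ ℂ^{m×n} with m ≤ n, and let B = [Q₁, Q₂] · [[R₁₁, R₁₂],[0, R₂₂]] be a full QR factorization, where [Q₁, Q₂] ∈ ℂ^{m×m} is unitary, Q₂ ∈ ℂ^{m×ℓ} (so Q₁ ∈ ℂ^{m×(m−ℓ)}), and R₁₁ ∈ ℂ^{(m−ℓ)×(m−ℓ)}. Let V₀ ∈ ℂ^{m×k} have orthonormal columns (V₀*V₀ = I_k) with k ≤ ℓ. Then ‖V₀*Q₁‖₂ · σ_min(R₁₁) ≤ ‖V₀*B‖₂; equivalently the sine of the largest canonical angle between span(V₀) and span(Q₂), which equals ‖V₀*Q₁‖₂, is at most ‖V₀*B‖₂ / σ_min(R₁₁) whenever σ_min(R₁₁) > 0. -/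
open Matrix

/-- Spectral (L2 operator) norm of a complex matrix. -/
noncomputable def specNorm {m n : Type*} [Fintype m] [Fintype n] [DecidableEq n]
    (M : Matrix m n ℂ) : ℝ :=
  ‖LinearMap.toContinuousLinearMap (Matrix.toEuclideanLin M)‖

/-- Smallest singular value of a square complex matrix, as the infimum of `‖R v‖`
over unit vectors `v`. -/
noncomputable def sigmaMin {p : Type*} [Fintype p] [DecidableEq p]
    (R : Matrix p p ℂ) : ℝ :=
  ⨅ v : {v : EuclideanSpace ℂ p // ‖v‖ = 1}, ‖Matrix.toEuclideanLin R v.1‖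

/-!
Multiplying the QR factorization on the right by the isometry `[I; 0]` picks out its first
block column: `V₀ᴴ B [I; 0] = V₀ᴴ Q₁ R₁₁`. Hence `‖V₀ᴴ B‖ ≥ ‖V₀ᴴ Q₁ R₁₁‖ ≥ ‖V₀ᴴ Q₁‖ σ_min(R₁₁)`;
the last step holds because when `σ_min(R₁₁) > 0` the matrix `R₁₁` is invertible and shrinks
no vector by a factor smaller than `σ_min(R₁₁)`.
-/

theorem ContinuousLinearMap.mul_opNorm_le_opNorm_comp {𝕜 E F G : Type*}
    [NontriviallyNormedField 𝕜]
    [NormedAddCommGroup E] [NormedAddCommGroup F] [NormedAddCommGroup G]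
    [NormedSpace 𝕜 E] [NormedSpace 𝕜 F] [NormedSpace 𝕜 G]
    (S : F →L[𝕜] G) {T : E →L[𝕜] F} (hT : Function.Surjective T) {c : ℝ} (hc : 0 < c)
    (hTc : ∀ v, c * ‖v‖ ≤ ‖T v‖) : c * ‖S‖ ≤ ‖S.comp T‖ := by
  rw [mul_comm, ← le_div_iff₀ hc]
  refine S.opNorm_le_bound (by positivity) fun x => ?_
  obtain ⟨w, rfl⟩ := hT x
  rw [div_mul_eq_mul_div, le_div_iff₀ hc]
  calc ‖S (T w)‖ * c ≤ ‖S.comp T‖ * ‖w‖ * c := by gcongr; exact (S.comp T).le_opNorm w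
    _ = ‖S.comp T‖ * (c * ‖w‖) := by ring
    _ ≤ ‖S.comp T‖ * ‖T w‖ := by gcongr; exact hTc w

open scoped Matrix.Norms.L2Operator

section
variable {m n p : Type*} [Fintype m] [Fintype n] [Fintype p] [DecidableEq n] [DecidableEq p]

theorem specNorm_eq_l2_opNorm (M : Matrix m n ℂ) : specNorm M = ‖M‖ := rfl

theorem toContinuousLinearMap_toEuclideanLin_mul (A : Matrix m n ℂ) (B : Matrix n p ℂ) :
    LinearMap.toContinuousLinearMap (toEuclideanLin (A * B)) =
      (LinearMap.toContinuousLinearMap (toEuclideanLin A)).comp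
        (LinearMap.toContinuousLinearMap (toEuclideanLin B)) := by
  ext v
  simp [mulVec_mulVec]

theorem Matrix.l2_opNorm_le_one_of_conjTranspose_mul_self_eq_one {𝕜 : Type*} [RCLike 𝕜]
    {A : Matrix m n 𝕜} (hA : Aᴴ * A = 1) : ‖A‖ ≤ 1 := by
  have h1 : ‖(1 : Matrix n n 𝕜)‖ ≤ 1 := by
    rw [l2_opNorm_def, LinearEquiv.trans_apply, toLpLin_one]
    exact ContinuousLinearMap.norm_id_le
  have : ‖A‖ * ‖A‖ ≤ 1 := by rwa [← l2_opNorm_conjTranspose_mul_self, hA]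
  nlinarith [norm_nonneg A]

theorem sigmaMin_nonneg (R : Matrix p p ℂ) : 0 ≤ sigmaMin R :=
  Real.iInf_nonneg fun _ => norm_nonneg _

theorem sigmaMin_mul_norm_le (R : Matrix p p ℂ) (v : EuclideanSpace ℂ p) :
    sigmaMin R * ‖v‖ ≤ ‖toEuclideanLin R v‖ := by
  rcases eq_or_ne v 0 with rfl | hv
  · simp
  have hbdd : BddBelow (Set.range fun u : {u : EuclideanSpace ℂ p // ‖u‖ = 1} =>
      ‖toEuclideanLin R u.1‖) := ⟨0, by rintro _ ⟨u, rfl⟩; exact norm_nonneg _⟩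
  have h := ciInf_le hbdd ⟨_, norm_smul_inv_norm (𝕜 := ℂ) hv⟩
  rw [← le_inv_mul_iff₀' (norm_pos_iff.mpr hv)]
  simpa [sigmaMin, norm_smul] using h

theorem specNorm_mul_sigmaMin_le (M : Matrix m p ℂ) (R : Matrix p p ℂ) :
    specNorm M * sigmaMin R ≤ specNorm (M * R) := by
  rcases (sigmaMin_nonneg R).eq_or_lt with h0 | hpos
  · rw [← h0, mul_zero]
    exact norm_nonneg _
  set T := LinearMap.toContinuousLinearMap (toEuclideanLin R)
  have hinj : Function.Injective T := by
    refine (injective_iff_map_eq_zero T).2 fun v hv => norm_eq_zero.1 ?_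
    have hRv := sigmaMin_mul_norm_le R v
    rw [show toEuclideanLin R v = 0 from hv, norm_zero] at hRv
    exact le_antisymm (nonpos_of_mul_nonpos_right hRv hpos) (norm_nonneg v)
  rw [mul_comm, specNorm, specNorm, toContinuousLinearMap_toEuclideanLin_mul]
  exact ContinuousLinearMap.mul_opNorm_le_opNorm_comp _
    (LinearMap.injective_iff_surjective.1 hinj) hpos (sigmaMin_mul_norm_le R)
end

theorem fromCols_mul_fromBlocks_mul_fromRows_one_zero {α m p ℓ q : Type*} [CommRing α]
    [Fintype p] [Fintype ℓ] [Fintype q] [DecidableEq p]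
    (Q₁ : Matrix m p α) (Q₂ : Matrix m ℓ α) (R₁₁ : Matrix p p α) (R₁₂ : Matrix p q α)
    (R₂₂ : Matrix ℓ q α) :
    fromCols Q₁ Q₂ * fromBlocks R₁₁ R₁₂ 0 R₂₂ * fromRows (1 : Matrix p p α) (0 : Matrix q p α) =
      Q₁ * R₁₁ := by
  rw [fromCols_mul_fromBlocks, fromCols_mul_fromRows]
  simp

theorem stmt0_general {p ℓ q k : ℕ}
    (B : Matrix (Fin (p + ℓ)) (Fin p ⊕ Fin q) ℂ)
    (Q₁ : Matrix (Fin (p + ℓ)) (Fin p) ℂ) (Q₂ : Matrix (Fin (p + ℓ)) (Fin ℓ) ℂ)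
    (R₁₁ : Matrix (Fin p) (Fin p) ℂ) (R₁₂ : Matrix (Fin p) (Fin q) ℂ)
    (R₂₂ : Matrix (Fin ℓ) (Fin q) ℂ)
    (hB : B = fromCols Q₁ Q₂ * fromBlocks R₁₁ R₁₂ 0 R₂₂)
    (V₀ : Matrix (Fin (p + ℓ)) (Fin k) ℂ) :
    specNorm (V₀ᴴ * Q₁) * sigmaMin R₁₁ ≤ specNorm (V₀ᴴ * B) ∧
      (0 < sigmaMin R₁₁ →
        specNorm (V₀ᴴ * Q₁) ≤ specNorm (V₀ᴴ * B) / sigmaMin R₁₁) := by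
  set E : Matrix (Fin p ⊕ Fin q) (Fin p) ℂ := fromRows 1 0
  have hE : ‖E‖ ≤ 1 := l2_opNorm_le_one_of_conjTranspose_mul_self_eq_one <| by
    simp [E, conjTranspose_fromRows_eq_fromCols_conjTranspose, fromCols_mul_fromRows]
  have hfirst : V₀ᴴ * Q₁ * R₁₁ = V₀ᴴ * B * E := by
    rw [Matrix.mul_assoc V₀ᴴ, hB, Matrix.mul_assoc V₀ᴴ,
      fromCols_mul_fromBlocks_mul_fromRows_one_zero]
  have hbound : specNorm (V₀ᴴ * Q₁) * sigmaMin R₁₁ ≤ specNorm (V₀ᴴ * B) :=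
    calc specNorm (V₀ᴴ * Q₁) * sigmaMin R₁₁ ≤ specNorm (V₀ᴴ * Q₁ * R₁₁) :=
          specNorm_mul_sigmaMin_le _ _
      _ ≤ ‖V₀ᴴ * B‖ * ‖E‖ := by rw [hfirst, specNorm_eq_l2_opNorm]; exact l2_opNorm_mul _ _
      _ ≤ ‖V₀ᴴ * B‖ := mul_le_of_le_one_right (norm_nonneg _) hE
      _ = specNorm (V₀ᴴ * B) := (specNorm_eq_l2_opNorm _).symm
  exact ⟨hbound, fun hpos => (le_div_iff₀ hpos).2 hbound⟩

/-- Theorem (perturbation bound for the null space).  Let `B ∈ ℂ^{m×n}` with `m ≤ n`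
(here `m = p + ℓ`, `n = p + q`, `ℓ ≤ q`) have full QR factorization
`B = [Q₁, Q₂] · [[R₁₁, R₁₂],[0, R₂₂]]` with `[Q₁, Q₂]` unitary, `Q₂ ∈ ℂ^{m×ℓ}`,
`R₁₁ ∈ ℂ^{(m−ℓ)×(m−ℓ)}`.  If `V₀ ∈ ℂ^{m×k}` has orthonormal columns and `k ≤ ℓ`, then
`‖V₀*Q₁‖₂ · σ_min(R₁₁) ≤ ‖V₀*B‖₂`; equivalently, whenever `σ_min(R₁₁) > 0`,
the sine of the largest canonical angle between span(V₀) and span(Q₂), which equals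
`‖V₀*Q₁‖₂`, is at most `‖V₀*B‖₂ / σ_min(R₁₁)`. -/
theorem stmt0 {p ℓ q k : ℕ} (hmn : ℓ ≤ q)
    (B : Matrix (Fin (p + ℓ)) (Fin p ⊕ Fin q) ℂ)
    (Q₁ : Matrix (Fin (p + ℓ)) (Fin p) ℂ) (Q₂ : Matrix (Fin (p + ℓ)) (Fin ℓ) ℂ)
    (R₁₁ : Matrix (Fin p) (Fin p) ℂ) (R₁₂ : Matrix (Fin p) (Fin q) ℂ)
    (R₂₂ : Matrix (Fin ℓ) (Fin q) ℂ)
    (hQunit : (fromCols Q₁ Q₂)ᴴ * fromCols Q₁ Q₂ = 1 ∧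
      fromCols Q₁ Q₂ * (fromCols Q₁ Q₂)ᴴ = 1)
    (hB : B = fromCols Q₁ Q₂ * fromBlocks R₁₁ R₁₂ 0 R₂₂)
    (V₀ : Matrix (Fin (p + ℓ)) (Fin k) ℂ) (hV₀ : V₀ᴴ * V₀ = 1) (hk : k ≤ ℓ) :
    specNorm (V₀ᴴ * Q₁) * sigmaMin R₁₁ ≤ specNorm (V₀ᴴ * B) ∧
      (0 < sigmaMin R₁₁ →
        specNorm (V₀ᴴ * Q₁) ≤ specNorm (V₀ᴴ * B) / sigmaMin R₁₁) :=
  stmt0_general B Q₁ Q₂ R₁₁ R₁₂ R₂₂ hB V₀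
end

section
/- Let X ∈ ℂ^{m×n} and c > 0, and let [cX; I_n] = [Q₁; Q₂] R be a thin QR factorization of the (m+n)×n stacked matrix, where Q₁ ∈ ℂ^{m×n}, Q₂ ∈ ℂ^{n×n}, [Q₁; Q₂] has orthonormal columns (Q₁*Q₁ + Q₂*Q₂ = I_n), and R ∈ ℂ^{n×n} is invertible. Then c X (I_n + c² X* X)^{−1} = Q₁ Q₂*. -/
/-! The block rows of the factorization say `A = Q₁ R` and `Q₂ R = 1`, so `R` is invertible with
inverse `Q₂`. Then `1 + AᴴA = Rᴴ (Q₁ᴴQ₁ + Q₂ᴴQ₂) R = RᴴR`, whose inverse is `Q₂ Q₂ᴴ`, and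
`A (1 + AᴴA)⁻¹ = Q₁ R Q₂ Q₂ᴴ = Q₁ Q₂ᴴ`. -/

open Matrix

namespace Matrix

variable {α m n : Type*} [CommRing α] [StarRing α] [Fintype n] [DecidableEq n]

theorem one_add_conjTranspose_mul_self_eq_of_fromRows_eq {A Q₁ : Matrix m n α}
    {Q₂ R : Matrix n n α} [Fintype m] (hQR : fromRows A 1 = fromRows Q₁ Q₂ * R)
    (hQ : Q₁ᴴ * Q₁ + Q₂ᴴ * Q₂ = 1) :
    1 + Aᴴ * A = Rᴴ * R := by
  rw [fromRows_mul, fromRows_ext_iff] at hQR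
  obtain ⟨hA, hI⟩ := hQR
  calc 1 + Aᴴ * A = (Q₂ * R)ᴴ * (Q₂ * R) + (Q₁ * R)ᴴ * (Q₁ * R) := by
        rw [← hA, ← hI, conjTranspose_one, one_mul]
    _ = Rᴴ * (Q₁ᴴ * Q₁ + Q₂ᴴ * Q₂) * R := by
        simp only [conjTranspose_mul, Matrix.mul_add, Matrix.add_mul, Matrix.mul_assoc]
        abel
    _ = Rᴴ * R := by rw [hQ, Matrix.mul_one]

theorem inv_conjTranspose_mul_self_of_mul_eq_one {Q R : Matrix n n α} (h : Q * R = 1) :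
    (Rᴴ * R)⁻¹ = Q * Qᴴ := by
  have hRQ : R * Q = 1 := mul_eq_one_comm.mp h
  apply inv_eq_left_inv
  calc Q * Qᴴ * (Rᴴ * R) = Q * (R * Q)ᴴ * R := by
        simp only [conjTranspose_mul, Matrix.mul_assoc]
    _ = 1 := by rw [hRQ, conjTranspose_one, Matrix.mul_one, h]

theorem mul_inv_one_add_conjTranspose_mul_self_of_fromRows_eq {A Q₁ : Matrix m n α}
    {Q₂ R : Matrix n n α} [Fintype m] (hQR : fromRows A 1 = fromRows Q₁ Q₂ * R)
    (hQ : Q₁ᴴ * Q₁ + Q₂ᴴ * Q₂ = 1) :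
    A * (1 + Aᴴ * A)⁻¹ = Q₁ * Q₂ᴴ := by
  rw [one_add_conjTranspose_mul_self_eq_of_fromRows_eq hQR hQ]
  rw [fromRows_mul, fromRows_ext_iff] at hQR
  obtain ⟨hA, hI⟩ := hQR
  rw [inv_conjTranspose_mul_self_of_mul_eq_one hI.symm, hA, Matrix.mul_assoc,
    ← Matrix.mul_assoc R, mul_eq_one_comm.mp hI.symm, Matrix.one_mul]

end Matrix

theorem stmt7_general {m n : ℕ} (X : Matrix (Fin m) (Fin n) ℂ) (c : ℝ)
    (Q₁ : Matrix (Fin m) (Fin n) ℂ) (Q₂ R : Matrix (Fin n) (Fin n) ℂ)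
    (hQR : Matrix.fromRows ((c : ℂ) • X) (1 : Matrix (Fin n) (Fin n) ℂ) =
      Matrix.fromRows Q₁ Q₂ * R)
    (hQ : Q₁ᴴ * Q₁ + Q₂ᴴ * Q₂ = 1) :
    (c : ℂ) • (X * (1 + ((c : ℂ) ^ 2) • (Xᴴ * X))⁻¹) = Q₁ * Q₂ᴴ := by
  have hsq : ((c : ℂ) ^ 2) • (Xᴴ * X) = ((c : ℂ) • X)ᴴ * ((c : ℂ) • X) := by
    rw [conjTranspose_smul, Complex.star_def, Complex.conj_ofReal, smul_mul, Matrix.mul_smul,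
      smul_smul, sq]
  rw [hsq, ← smul_mul, mul_inv_one_add_conjTranspose_mul_self_of_fromRows_eq hQR hQ]

/-- Let `X ∈ ℂ^{m×n}` and `c > 0`, and let `[cX; I] = [Q₁; Q₂] R` be a thin QR
factorization of the stacked matrix (`Q₁*Q₁ + Q₂*Q₂ = I`, `R` invertible).  Then
`c X (I + c² X* X)⁻¹ = Q₁ Q₂*`. -/
theorem stmt7 {m n : ℕ} (X : Matrix (Fin m) (Fin n) ℂ) (c : ℝ) (hc : 0 < c)
    (Q₁ : Matrix (Fin m) (Fin n) ℂ) (Q₂ R : Matrix (Fin n) (Fin n) ℂ)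
    (hQR : Matrix.fromRows ((c : ℂ) • X) (1 : Matrix (Fin n) (Fin n) ℂ) =
      Matrix.fromRows Q₁ Q₂ * R)
    (hQ : Q₁ᴴ * Q₁ + Q₂ᴴ * Q₂ = 1) (hR : IsUnit R) :
    (c : ℂ) • (X * (1 + ((c : ℂ) ^ 2) • (Xᴴ * X))⁻¹) = Q₁ * Q₂ᴴ :=
  stmt7_general X c Q₁ Q₂ R hQR hQ
end

section
/- Let X ∈ ℂ^{m×n}, let a, b, c be real scalars with c > 0, and let [√c · X; I_n] = [Q₁; Q₂] R be a thin QR factorization with Q₁ ∈ ℂ^{m×n}, Q₂ ∈ ℂ^{n×n}, Q₁*Q₁ + Q₂*Q₂ = I_n, and R ∈ ℂ^{n×n} invertible. Then (b/c) X + (1/√c)(a − b/c) Q₁ Q₂* = X (a I_n + b X* X)(I_n + c X* X)^{−1}; that is, the QR-based (inverse-free) QDWH update formula produces the same matrix as the dynamically weighted Halley iteration X ↦ X(aI + bX*X)(I + cX*X)^{−1}. -/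
open Matrix

/-!
Write the thin QR factorization blockwise: `Q₁ R = √c X` and `Q₂ R = I`, so `Q₂ = R⁻¹`, and the
isometry condition gives `Rᴴ R = I + c XᴴX`. Hence `Q₁ Q₂ᴴ = √c X R⁻¹ R⁻ᴴ = √c X (I + c XᴴX)⁻¹`.
On the other side, `a I + b XᴴX = (b/c)(I + c XᴴX) + (a - b/c) I`, which splits the Halley
update into `(b/c) X + (a - b/c) X (I + c XᴴX)⁻¹`.
-/

namespace Matrix

section ThinQR

variable {m n K : Type*} [Fintype m] [Fintype n] [DecidableEq n] [CommRing K] [StarRing K]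
  {Y Q₁ : Matrix m n K} {Q₂ R : Matrix n n K}

theorem conjTranspose_mul_self_eq_one_add_of_isometry (hY : Q₁ * R = Y) (hR : Q₂ * R = 1)
    (hQ : Q₁ᴴ * Q₁ + Q₂ᴴ * Q₂ = 1) :
    Rᴴ * R = 1 + Yᴴ * Y := by
  calc Rᴴ * R = Rᴴ * (Q₁ᴴ * Q₁ + Q₂ᴴ * Q₂) * R := by rw [hQ, Matrix.mul_one]
    _ = (Q₂ * R)ᴴ * (Q₂ * R) + (Q₁ * R)ᴴ * (Q₁ * R) := by
      simp only [conjTranspose_mul, Matrix.mul_add, Matrix.add_mul, Matrix.mul_assoc, add_comm]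
    _ = 1 + Yᴴ * Y := by rw [hY, hR, conjTranspose_one, Matrix.one_mul]

theorem one_add_conjTranspose_mul_self_mul_eq_one_of_isometry (hY : Q₁ * R = Y)
    (hR : Q₂ * R = 1) (hQ : Q₁ᴴ * Q₁ + Q₂ᴴ * Q₂ = 1) :
    (1 + Yᴴ * Y) * (Q₂ * Q₂ᴴ) = 1 := by
  rw [← conjTranspose_mul_self_eq_one_add_of_isometry hY hR hQ, Matrix.mul_assoc,
    ← Matrix.mul_assoc R, mul_eq_one_comm.1 hR, Matrix.one_mul, ← conjTranspose_mul, hR,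
    conjTranspose_one]

theorem mul_conjTranspose_eq_mul_inv_one_add_of_isometry (hY : Q₁ * R = Y) (hR : Q₂ * R = 1)
    (hQ : Q₁ᴴ * Q₁ + Q₂ᴴ * Q₂ = 1) :
    Q₁ * Q₂ᴴ = Y * (1 + Yᴴ * Y)⁻¹ := by
  rw [inv_eq_right_inv (one_add_conjTranspose_mul_self_mul_eq_one_of_isometry hY hR hQ), ← hY,
    Matrix.mul_assoc, ← Matrix.mul_assoc R, mul_eq_one_comm.1 hR, Matrix.one_mul]

end ThinQR

theorem mul_smul_one_add_smul_mul_inv_eq {m n K : Type*} [Fintype n] [DecidableEq n] [Field K]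
    (X : Matrix m n K) (A : Matrix n n K) (a b c : K) (hc : c ≠ 0)
    (hA : IsUnit (1 + c • A).det) :
    X * (a • 1 + b • A) * (1 + c • A)⁻¹ = (b / c) • X + (a - b / c) • (X * (1 + c • A)⁻¹) := by
  have hsplit : a • 1 + b • A = (b / c) • (1 + c • A) + (a - b / c) • (1 : Matrix n n K) := by
    rw [smul_add, smul_smul, div_mul_cancel₀ b hc]
    module
  rw [hsplit, Matrix.mul_add, Matrix.add_mul, Matrix.mul_smul, Matrix.smul_mul,
    mul_nonsing_inv_cancel_right _ _ hA, Matrix.mul_smul, Matrix.smul_mul, Matrix.mul_one]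

end Matrix

theorem stmt8_general {m n : ℕ} (X : Matrix (Fin m) (Fin n) ℂ) (a b c : ℝ) (hc : 0 < c)
    (Q₁ : Matrix (Fin m) (Fin n) ℂ) (Q₂ R : Matrix (Fin n) (Fin n) ℂ)
    (hQR : Matrix.fromRows (((Real.sqrt c : ℝ) : ℂ) • X)
        (1 : Matrix (Fin n) (Fin n) ℂ) = Matrix.fromRows Q₁ Q₂ * R)
    (hQ : Q₁ᴴ * Q₁ + Q₂ᴴ * Q₂ = 1) :
    ((b / c : ℝ) : ℂ) • X +
        ((1 / Real.sqrt c * (a - b / c) : ℝ) : ℂ) • (Q₁ * Q₂ᴴ) =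
      X * ((a : ℂ) • (1 : Matrix (Fin n) (Fin n) ℂ) + (b : ℂ) • (Xᴴ * X)) *
        (1 + (c : ℂ) • (Xᴴ * X))⁻¹ := by
  obtain ⟨hY, hR⟩ := (fromRows_ext_iff _ _ _ _).1 (hQR.trans (fromRows_mul _ _ _))
  have hsc : (Real.sqrt c : ℂ) ≠ 0 := Complex.ofReal_ne_zero.2 (Real.sqrt_pos.2 hc).ne'
  have hYY : ((Real.sqrt c : ℂ) • X)ᴴ * ((Real.sqrt c : ℂ) • X) = (c : ℂ) • (Xᴴ * X) := by
    rw [conjTranspose_smul, Complex.star_def, Complex.conj_ofReal, Matrix.smul_mul,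
      Matrix.mul_smul, smul_smul, ← Complex.ofReal_mul, Real.mul_self_sqrt hc.le]
  have hQQ := mul_conjTranspose_eq_mul_inv_one_add_of_isometry hY.symm hR.symm hQ
  have hM := isUnit_det_of_right_inverse
    (one_add_conjTranspose_mul_self_mul_eq_one_of_isometry hY.symm hR.symm hQ)
  rw [hYY] at hQQ hM
  rw [mul_smul_one_add_smul_mul_inv_eq _ _ _ _ _ (by exact_mod_cast hc.ne') hM, hQQ,
    Matrix.smul_mul, smul_smul]
  congr 2
  · push_cast
    rfl
  · push_cast
    field_simp

/-- QR-based (inverse-free) QDWH update: for `X ∈ ℂ^{m×n}`, real `a, b, c` with `c > 0`,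
and a thin QR factorization `[√c·X; I] = [Q₁; Q₂] R` (`Q₁*Q₁ + Q₂*Q₂ = I`, `R` invertible),
`(b/c) X + (1/√c)(a − b/c) Q₁ Q₂* = X (a I + b X* X)(I + c X* X)⁻¹`. -/
theorem stmt8 {m n : ℕ} (X : Matrix (Fin m) (Fin n) ℂ) (a b c : ℝ) (hc : 0 < c)
    (Q₁ : Matrix (Fin m) (Fin n) ℂ) (Q₂ R : Matrix (Fin n) (Fin n) ℂ)
    (hQR : Matrix.fromRows (((Real.sqrt c : ℝ) : ℂ) • X)
        (1 : Matrix (Fin n) (Fin n) ℂ) = Matrix.fromRows Q₁ Q₂ * R)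
    (hQ : Q₁ᴴ * Q₁ + Q₂ᴴ * Q₂ = 1) (hR : IsUnit R) :
    ((b / c : ℝ) : ℂ) • X +
        ((1 / Real.sqrt c * (a - b / c) : ℝ) : ℂ) • (Q₁ * Q₂ᴴ) =
      X * ((a : ℂ) • (1 : Matrix (Fin n) (Fin n) ℂ) + (b : ℂ) • (Xᴴ * X)) *
        (1 + (c : ℂ) • (Xᴴ * X))⁻¹ :=
  stmt8_general X a b c hc Q₁ Q₂ R hQR hQ
end

section
/- Let X ∈ ℂ^{m×n}, let a, b, c be real scalars with c > 0, set Z = I_n + c X* X, and let W ∈ ℂ^{n×n} be any invertible matrix with W* W = Z (e.g., the Cholesky factor of the Hermitian positive definite matrix Z). Then (b/c) X + (a − b/c)(X W^{−1}) W^{−*} = X (a I_n + b X* X)(I_n + c X* X)^{−1}; that is, the Cholesky-based QDWH update formula produces the same matrix as the dynamically weighted Halley iteration. -/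
/-! Since `W⁻¹ W⁻ᴴ = (Wᴴ W)⁻¹ = Z⁻¹` and `a I + b XᴴX = (b/c) Z + (a - b/c) I`, the right-hand side
is `X ((b/c) Z + (a - b/c) I) Z⁻¹`, which expands to the left-hand side; `Z` is invertible
because it is positive definite. -/

open Matrix
open scoped ComplexOrder

theorem smul_add_smul_eq_div_smul_add_sub_div_smul {R M : Type*} [Field R] [AddCommGroup M]
    [Module R M] {U A Z : M} {c : R} (hc : c ≠ 0) (hZ : Z = U + c • A) (a b : R) :
    a • U + b • A = (b / c) • Z + (a - b / c) • U := by
  rw [hZ, smul_add, smul_smul, div_mul_cancel₀ _ hc]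
  module

theorem Matrix.posDef_one_add_smul_conjTranspose_mul_self {𝕜 m n : Type*} [RCLike 𝕜]
    [Fintype m] [Fintype n] [DecidableEq n] (X : Matrix m n 𝕜) {c : ℝ} (hc : 0 ≤ c) :
    (1 + (c : 𝕜) • (Xᴴ * X)).PosDef :=
  PosDef.one.add_posSemidef
    ((posSemidef_conjTranspose_mul_self X).smul (RCLike.ofReal_nonneg.mpr hc))

theorem Matrix.inv_mul_inv_conjTranspose {α n : Type*} [Fintype n] [DecidableEq n] [CommRing α]
    [StarRing α] (W : Matrix n n α) : W⁻¹ * W⁻¹ᴴ = (Wᴴ * W)⁻¹ := by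
  rw [mul_inv_rev, conjTranspose_nonsing_inv]

theorem Matrix.mul_smul_add_smul_one_mul_inv {α m n : Type*} [Fintype n] [DecidableEq n]
    [CommRing α] (X : Matrix m n α) {Z : Matrix n n α} (hZ : IsUnit Z) (s t : α) :
    X * (s • Z + t • 1) * Z⁻¹ = s • X + t • (X * Z⁻¹) := by
  rw [Matrix.mul_add, Matrix.add_mul, Matrix.mul_smul, Matrix.smul_mul, Matrix.mul_assoc,
    mul_nonsing_inv _ ((isUnit_iff_isUnit_det Z).mp hZ), Matrix.mul_one, Matrix.mul_smul,
    Matrix.smul_mul, Matrix.mul_one]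

theorem stmt9_general {m n : ℕ} (X : Matrix (Fin m) (Fin n) ℂ) (a b c : ℝ) (hc : 0 < c)
    (Z W : Matrix (Fin n) (Fin n) ℂ)
    (hZ : Z = 1 + (c : ℂ) • (Xᴴ * X))
    (hWZ : Wᴴ * W = Z) :
    ((b / c : ℝ) : ℂ) • X + ((a - b / c : ℝ) : ℂ) • (X * W⁻¹ * (W⁻¹)ᴴ) =
      X * ((a : ℂ) • (1 : Matrix (Fin n) (Fin n) ℂ) + (b : ℂ) • (Xᴴ * X)) *
        (1 + (c : ℂ) • (Xᴴ * X))⁻¹ := by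
  have hZunit : IsUnit Z := hZ ▸ (X.posDef_one_add_smul_conjTranspose_mul_self hc.le).isUnit
  have hweights : (a : ℂ) • (1 : Matrix (Fin n) (Fin n) ℂ) + (b : ℂ) • (Xᴴ * X) =
      ((b / c : ℝ) : ℂ) • Z + ((a - b / c : ℝ) : ℂ) • 1 := by
    push_cast
    exact smul_add_smul_eq_div_smul_add_sub_div_smul (by exact_mod_cast hc.ne') hZ _ _
  rw [Matrix.mul_assoc X, W.inv_mul_inv_conjTranspose, hWZ, ← hZ, hweights,
    X.mul_smul_add_smul_one_mul_inv hZunit]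

/-- Cholesky-based QDWH update: for `X ∈ ℂ^{m×n}`, real `a, b, c` with `c > 0`,
`Z = I + c X* X`, and any invertible `W` with `W* W = Z`,
`(b/c) X + (a − b/c)(X W⁻¹) W⁻* = X (a I + b X* X)(I + c X* X)⁻¹`. -/
theorem stmt9 {m n : ℕ} (X : Matrix (Fin m) (Fin n) ℂ) (a b c : ℝ) (hc : 0 < c)
    (Z W : Matrix (Fin n) (Fin n) ℂ)
    (hZ : Z = 1 + (c : ℂ) • (Xᴴ * X))
    (hW : IsUnit W) (hWZ : Wᴴ * W = Z) :
    ((b / c : ℝ) : ℂ) • X + ((a - b / c : ℝ) : ℂ) • (X * W⁻¹ * (W⁻¹)ᴴ) =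
      X * ((a : ℂ) • (1 : Matrix (Fin n) (Fin n) ℂ) + (b : ℂ) • (Xᴴ * X)) *
        (1 + (c : ℂ) • (Xᴴ * X))⁻¹ :=
  stmt9_general X a b c hc Z W hZ hWZ
end
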